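/- arXiv:2403.18414 — 2 statements merged into one kernel-verified Lean document; each statement's English description precedes it below -/
import Mathlib

section
/- Let d ≥ 1 and for n ∈ ℕ set f_{n+1}(x) = ∏_{j=1}^d (V_{2^{n+1}}(x_j) − V_{2^n}(x_j)). Then there exist constants C₁, C₂ > 0 (independent of n) such that C₁·2^{nd} ≤ ‖f_{n+1}‖_{L_∞(ℝ^d)} ≤ C₂·2^{nd} for all n ∈ ℕ. -/
open MeasureTheory ENNReal Finset
open scoped RealInnerProductSpace

noncomputable section

/-- `d`-dimensional Euclidean space `ℝ^d`. -/
abbrev Ed (d : ℕ) := EuclideanSpace ℝ (Fin d)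

/-- The `l`-th difference of `f` at `x` with step `h`:
`Δ_h^l f(x) = ∑_{j=0}^l (-1)^{j+l} C(l,j) f(x + j h)`. -/
def deltal {d : ℕ} (l : ℕ) (h : Ed d) (f : Ed d → ℝ) (x : Ed d) : ℝ :=
  ∑ j ∈ Finset.range (l + 1), (-1 : ℝ) ^ (j + l) * (l.choose j) * f (x + (j : ℝ) • h)

/-- The `l`-th modulus of continuity of `f` in `L_p(ℝ^d)` (valued in `ℝ≥0∞`):
`Ω_l(f,t)_p = sup_{‖h‖ ≤ t} ‖Δ_h^l f‖_p`. -/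
def modCont (d l : ℕ) (p : ℝ≥0∞) (f : Ed d → ℝ) (t : ℝ) : ℝ≥0∞ :=
  ⨆ (h : Ed d) (_ : ‖h‖ ≤ t), eLpNorm (deltal l h f) p volume

/-- The generalized Nikol'skii–Besov norm `‖f‖_{B^Ω_{p,θ}(ℝ^d)}`, valued in `ℝ≥0∞`,
for `1 ≤ θ ≤ ∞` (`θ = ∞` uses the sup modification). -/
def besovNorm (d l : ℕ) (p θ : ℝ≥0∞) (Ω : ℝ → ℝ) (f : Ed d → ℝ) : ℝ≥0∞ :=
  eLpNorm f p volume +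
    if θ = ∞ then ⨆ (t : ℝ) (_ : 0 < t), modCont d l p f t / ENNReal.ofReal (Ω t)
    else (∫⁻ t in Set.Ioi (0 : ℝ),
      (modCont d l p f t / ENNReal.ofReal (Ω t)) ^ θ.toReal / ENNReal.ofReal t) ^ (1 / θ.toReal)

/-- The class `B^Ω_{p,θ}(ℝ^d)`: the unit ball of the generalized Besov norm in `L_p`. -/
def besovClass (d l : ℕ) (p θ : ℝ≥0∞) (Ω : ℝ → ℝ) : Set (Ed d → ℝ) :=
  {f | MemLp f p volume ∧ besovNorm d l p θ Ω f ≤ 1}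

/-- `Ω ∈ Φ_{α,l}`: a modulus-of-continuity-type function of order `l` satisfying the
Bari–Stechkin conditions `(S^α)` and `(S_l)`. -/
structure IsPhi (α : ℝ) (l : ℕ) (Ω : ℝ → ℝ) : Prop where
  cont : ContinuousOn Ω (Set.Ici 0)
  zero : Ω 0 = 0
  pos : ∀ t : ℝ, 0 < t → 0 < Ω t
  mono : MonotoneOn Ω (Set.Ici 0)
  subpoly : ∃ C : ℝ, 0 < C ∧ ∀ (n : ℕ) (t : ℝ), 0 < t → Ω (n * t) ≤ C * (n : ℝ) ^ l * Ω t
  salpha : ∃ C : ℝ, 0 < C ∧ ∀ τ₁ τ₂ : ℝ, 0 < τ₁ → τ₁ ≤ τ₂ → τ₂ ≤ 1 →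
    Ω τ₁ / τ₁ ^ α ≤ C * (Ω τ₂ / τ₂ ^ α)
  sl : ∃ γ : ℝ, 0 < γ ∧ γ < l ∧ ∃ C : ℝ, 0 < C ∧ ∀ τ₁ τ₂ : ℝ, 0 < τ₁ → τ₁ ≤ τ₂ → τ₂ ≤ 1 →
    C * (Ω τ₂ / τ₂ ^ ((l : ℝ) - γ)) ≤ Ω τ₁ / τ₁ ^ ((l : ℝ) - γ)

/-- The one-dimensional de la Vallée Poussin kernel
`V_{2^s}(t) = 2^{-s}(cos 2^s t − cos 2^{s+1} t)/t²`. -/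
def V1 (s : ℕ) (t : ℝ) : ℝ :=
  ((2 : ℝ) ^ s)⁻¹ * (Real.cos (2 ^ s * t) - Real.cos (2 ^ (s + 1) * t)) / t ^ 2

/-- The `d`-dimensional de la Vallée Poussin kernel
`V_{2^s}(x) = 2^{-sd} ∏_j (cos 2^s x_j − cos 2^{s+1} x_j)/x_j²`. -/
def Vd (d s : ℕ) (x : Ed d) : ℝ := ∏ j, V1 s (x j)

/-- De la Vallée Poussin means `σ_{2^s}(f,x) = π^{-d} ∫ V_{2^s}(x−u) f(u) du`. -/
def sigmaVP (d s : ℕ) (f : Ed d → ℝ) (x : Ed d) : ℝ :=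
  (Real.pi ^ d)⁻¹ * ∫ u : Ed d, Vd d s (x - u) * f u

/-- The dyadic blocks `q_0(f) = σ_1(f)`, `q_s(f) = σ_{2^s}(f) − σ_{2^{s−1}}(f)` for `s ≥ 1`. -/
def qVP (d : ℕ) (f : Ed d → ℝ) : ℕ → Ed d → ℝ
  | 0 => sigmaVP d 0 f
  | s + 1 => fun x => sigmaVP d (s + 1) f x - sigmaVP d s f x

/-- `𝕍_{n−1}(f) = ∑_{s=0}^{n-1} q_s(f)` (so `VPsum d n f` is the de la Vallée Poussin sum
appearing in `ℰ_n(f) = ‖f − 𝕍_{n−1}(f)‖`). -/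
def VPsum (d n : ℕ) (f : Ed d → ℝ) : Ed d → ℝ :=
  fun x => ∑ s ∈ Finset.range n, qVP d f s x

/-- `ℰ_n(B^Ω_{p,θ}(ℝ^d))_{L_q(ℝ^d)} = sup_{f ∈ B^Ω_{p,θ}} ‖f − 𝕍_{n−1}(f)‖_{L_q}`. -/
def calE (d l : ℕ) (p θ q : ℝ≥0∞) (Ω : ℝ → ℝ) (n : ℕ) : ℝ≥0∞ :=
  ⨆ f ∈ besovClass d l p θ Ω, eLpNorm (fun x => f x - VPsum d n f x) q volume

/-- One-dimensional Dirichlet kernel `D_m(u) = sin(mu)/u`. -/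
def D1 (m : ℕ) (u : ℝ) : ℝ := Real.sin (m * u) / u

/-- Multivariate Dirichlet kernel `D_m(x) = ∏_j sin(m x_j)/x_j`. -/
def Dd (d m : ℕ) (x : Ed d) : ℝ := ∏ j, D1 m (x j)

/-- Fourier means `S_{2^s}(f,x) = π^{-d} ∫ f(t) D_{2^s}(x−t) dt`. -/
def Sdir (d s : ℕ) (f : Ed d → ℝ) (x : Ed d) : ℝ :=
  (Real.pi ^ d)⁻¹ * ∫ t : Ed d, f t * Dd d (2 ^ s) (x - t)

/-- The blocks `f_{(0)} = S_1(f)`, `f_{(s)} = S_{2^s}(f) − S_{2^{s−1}}(f)` for `s ≥ 1`. -/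
def fdir (d : ℕ) (f : Ed d → ℝ) : ℕ → Ed d → ℝ
  | 0 => Sdir d 0 f
  | s + 1 => fun x => Sdir d (s + 1) f x - Sdir d s f x

/-- The partial Fourier sum `S_n(f) = ∑_{s=0}^n f_{(s)}`. -/
def SnSum (d n : ℕ) (f : Ed d → ℝ) : Ed d → ℝ :=
  fun x => ∑ s ∈ Finset.range (n + 1), fdir d f s x

/-- `ℰ'_n(B^Ω_{p,θ}(ℝ^d))_{L_q(ℝ^d)} = sup_{f ∈ B^Ω_{p,θ}} ‖f − S_n(f)‖_{L_q}`. -/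
def calE' (d l : ℕ) (p θ q : ℝ≥0∞) (Ω : ℝ → ℝ) (n : ℕ) : ℝ≥0∞ :=
  ⨆ f ∈ besovClass d l p θ Ω, eLpNorm (fun x => f x - SnSum d n f x) q volume

/-- The Fourier transform of a Schwartz function with the normalization
`(𝔉φ)(λ) = (2π)^{-d/2} ∫ φ(t) e^{-i⟨λ,t⟩} dt`. -/
def schwartzFT (d : ℕ) (φ : SchwartzMap (Ed d) ℂ) (lam : Ed d) : ℂ :=
  (((2 * Real.pi) ^ ((d : ℝ) / 2))⁻¹ : ℝ) *
    ∫ t : Ed d, φ t * Complex.exp (-Complex.I * (⟪lam, t⟫ : ℝ))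

/-- The tempered distribution Fourier transform of `g ∈ L_p(ℝ^d)`:
`⟨𝔉g, φ⟩ = ⟨g, 𝔉φ⟩ = ∫ g(x) (𝔉φ)(x) dx`. -/
def distFT (d : ℕ) (g : Ed d → ℝ) (φ : SchwartzMap (Ed d) ℂ) : ℂ :=
  ∫ x : Ed d, (g x : ℂ) * schwartzFT d φ x

/-- The support of a tempered distribution `T`: the complement of the union of all open
sets on which `T` vanishes. -/
def distSupport (d : ℕ) (T : SchwartzMap (Ed d) ℂ → ℂ) : Set (Ed d) :=
  {x | ¬ ∃ U : Set (Ed d), IsOpen U ∧ x ∈ U ∧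
      ∀ φ : SchwartzMap (Ed d) ℂ, tsupport (fun y => φ y) ⊆ U → T φ = 0}

/-- `μ_{2^s}`, the Fourier transform of the one-dimensional de la Vallée Poussin kernel. -/
def muVP (s : ℕ) (u : ℝ) : ℝ :=
  if |u| ≤ 2 ^ s then Real.sqrt (Real.pi / 2)
  else if |u| ≤ 2 ^ (s + 1) then
    Real.sqrt (Real.pi / 2) * (((2 : ℝ) ^ s)⁻¹ * (2 ^ (s + 1) - |u|))
  else 0

/-- The test function `f_{n+1}(x) = ∏_j (V_{2^{n+1}}(x_j) − V_{2^n}(x_j))`. -/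
def fV (d n : ℕ) (x : Ed d) : ℝ := ∏ j, (V1 (n + 1) (x j) - V1 n (x j))

/-- The decomposition (sequence-space) norm
`(∑_s (Ω(2^{-s})^{-1} ‖q_s(f)‖_p)^θ)^{1/θ}` (sup for `θ = ∞`). -/
def seqNorm (d : ℕ) (p θ : ℝ≥0∞) (Ω : ℝ → ℝ) (f : Ed d → ℝ) : ℝ≥0∞ :=
  if θ = ∞ then
    ⨆ s : ℕ, eLpNorm (qVP d f s) p volume / ENNReal.ofReal (Ω ((2 : ℝ) ^ (-(s : ℝ))))
  else (∑' s : ℕ,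
    (eLpNorm (qVP d f s) p volume / ENNReal.ofReal (Ω ((2 : ℝ) ^ (-(s : ℝ))))) ^ θ.toReal) ^
      (1 / θ.toReal)

end

/-! `V_{2^(s+k)}(t) = 2^s V_{2^k}(2^s t)`, hence `f_{n+1}(x) = 2^{nd} f_1(2^n x)`. A dilation of `ℝ^d`
only rescales Lebesgue measure, so `‖f_{n+1}‖_∞ = 2^{nd} ‖f_1‖_∞` exactly and both constants can be
taken to be `‖f_1‖_∞`. It is finite because `|cos a - cos b| ≤ max(a², b²)/2` bounds the kernels,
and positive because `f_1` is continuous off the coordinate hyperplanes (where the division by `t²`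
has the junk value `0`) and equals `(2/π²)^d` at `(π, …, π)`. -/

open Real Filter

lemma abs_cos_sub_cos_le (a b : ℝ) : |cos a - cos b| ≤ max (a ^ 2) (b ^ 2) / 2 := by
  have ha := one_sub_sq_div_two_le_cos (x := a)
  have hb := one_sub_sq_div_two_le_cos (x := b)
  rw [abs_le]
  constructor <;> nlinarith [cos_le_one a, cos_le_one b, le_max_left (a ^ 2) (b ^ 2),
    le_max_right (a ^ 2) (b ^ 2)]

lemma abs_V1_le (s : ℕ) (t : ℝ) : |V1 s t| ≤ 2 * 2 ^ s := by
  rcases eq_or_ne t 0 with rfl | ht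
  · simp [V1]
  have hmax : max ((2 ^ s * t) ^ 2) ((2 ^ (s + 1) * t) ^ 2) = (2 ^ (s + 1) * t) ^ 2 :=
    max_eq_right (by
      rw [show (2 : ℝ) ^ (s + 1) * t = 2 * (2 ^ s * t) by ring]; nlinarith [sq_nonneg (2 ^ s * t)])
  calc |V1 s t| = (2 ^ s)⁻¹ * |cos (2 ^ s * t) - cos (2 ^ (s + 1) * t)| / t ^ 2 := by
        simp [V1, abs_div, abs_mul]
    _ ≤ (2 ^ s)⁻¹ * ((2 ^ (s + 1) * t) ^ 2 / 2) / t ^ 2 := by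
        gcongr; exact hmax ▸ abs_cos_sub_cos_le _ _
    _ = 2 * 2 ^ s := by field_simp; ring

lemma V1_add (k s : ℕ) (t : ℝ) : V1 (k + s) t = 2 ^ s * V1 k (2 ^ s * t) := by
  rcases eq_or_ne t 0 with rfl | ht
  · simp [V1]
  simp only [V1, pow_add, pow_succ]
  field_simp

lemma continuousAt_V1 (s : ℕ) {t : ℝ} (ht : t ≠ 0) : ContinuousAt (V1 s) t :=
  ContinuousAt.div (by fun_prop) (by fun_prop) (pow_ne_zero 2 ht)

lemma fV_eq_mul_fV_zero (d n : ℕ) (x : Ed d) :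
    fV d n x = (2 ^ n) ^ d * fV d 0 ((2 : ℝ) ^ n • x) := by
  have hpow : ((2 : ℝ) ^ n) ^ d = ∏ _j : Fin d, (2 : ℝ) ^ n := by simp
  rw [fV, fV, hpow, ← Finset.prod_mul_distrib]
  refine Finset.prod_congr rfl fun j _ => ?_
  rw [add_comm, V1_add, ← zero_add n, V1_add]
  simp [mul_sub]

lemma abs_fV_le (d n : ℕ) (x : Ed d) : |fV d n x| ≤ (6 * 2 ^ n) ^ d := by
  have hpow : ((6 : ℝ) * 2 ^ n) ^ d = ∏ _j : Fin d, 6 * (2 : ℝ) ^ n := by simp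
  rw [fV, Finset.abs_prod, hpow]
  refine Finset.prod_le_prod (fun _ _ => abs_nonneg _) fun j _ => ?_
  calc |V1 (n + 1) (x j) - V1 n (x j)| ≤ |V1 (n + 1) (x j)| + |V1 n (x j)| := abs_sub _ _
    _ ≤ 2 * 2 ^ (n + 1) + 2 * 2 ^ n := add_le_add (abs_V1_le _ _) (abs_V1_le _ _)
    _ = 6 * 2 ^ n := by ring

lemma continuousAt_fV (d n : ℕ) {x : Ed d} (hx : ∀ j, x j ≠ 0) : ContinuousAt (fV d n) x := by
  refine tendsto_finsetProd _ fun j _ => ContinuousAt.sub ?_ ?_ <;>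
    exact (continuousAt_V1 _ (hx j)).comp (f := fun y : Ed d => y j) (by fun_prop)

lemma fV_zero_const_pi (d : ℕ) : fV d 0 (WithLp.toLp 2 fun _ => π) = (2 / π ^ 2) ^ d := by
  have h4 : cos (2 ^ 2 * π) = 1 := by
    rw [show (2 : ℝ) ^ 2 * π = (2 : ℕ) * (2 * π) by push_cast; ring, cos_nat_mul_two_pi]
  simp [fV, V1, h4]
  ring

section EssSup

variable {X F : Type*} [TopologicalSpace X] [MeasurableSpace X] [NormedAddCommGroup F]

lemma eLpNormEssSup_ne_zero_of_continuousAt (μ : Measure X) [μ.IsOpenPosMeasure] {f : X → F}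
    {x : X} (hf : ContinuousAt f x) (hx : f x ≠ 0) : eLpNormEssSup f μ ≠ 0 := by
  rw [Ne, eLpNormEssSup_eq_zero_iff, EventuallyEq, ae_iff]
  exact (μ.measure_pos_of_mem_nhds (hf.eventually_ne hx)).ne'

lemma eLpNormEssSup_comp_smul {E : Type*} [NormedAddCommGroup E] [NormedSpace ℝ E]
    [MeasurableSpace E] [BorelSpace E] [FiniteDimensional ℝ E] (μ : Measure E)
    [μ.IsAddHaarMeasure] (g : E → F) {r : ℝ} (hr : r ≠ 0) :
    eLpNormEssSup (fun x => g (r • x)) μ = eLpNormEssSup g μ := by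
  have hc : ENNReal.ofReal |(r ^ Module.finrank ℝ E)⁻¹| ≠ 0 := by simp [hr]
  have hemb : MeasurableEmbedding (r • · : E → E) :=
    (Homeomorph.smulOfNeZero r hr).measurableEmbedding
  rw [eLpNormEssSup, eLpNormEssSup, ← essSup_ennreal_smul_measure hc (fun x => ‖g x‖ₑ),
    ← Measure.map_addHaar_smul μ hr, hemb.essSup_map_measure]
  rfl

end EssSup

lemma eLpNorm_top_fV (d n : ℕ) :
    eLpNorm (fV d n) ∞ volume = ENNReal.ofReal ((2 ^ n) ^ d) * eLpNorm (fV d 0) ∞ volume := by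
  have h : fV d n = ((2 : ℝ) ^ n) ^ d • fun x => fV d 0 ((2 : ℝ) ^ n • x) :=
    funext (fV_eq_mul_fV_zero d n)
  rw [h, eLpNorm_const_smul, eLpNorm_exponent_top, eLpNorm_exponent_top,
    eLpNormEssSup_comp_smul _ _ (by positivity), Real.enorm_of_nonneg (by positivity)]

lemma eLpNorm_top_fV_ne_top (d n : ℕ) : eLpNorm (fV d n) ∞ volume ≠ ∞ := by
  rw [eLpNorm_exponent_top]
  exact (eLpNormEssSup_lt_top_of_ae_bound (C := (6 * 2 ^ n) ^ d)
    (Eventually.of_forall fun x => abs_fV_le d n x)).ne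

lemma eLpNorm_top_fV_zero_ne_zero (d : ℕ) : eLpNorm (fV d 0) ∞ volume ≠ 0 := by
  rw [eLpNorm_exponent_top]
  refine eLpNormEssSup_ne_zero_of_continuousAt volume
    (continuousAt_fV d 0 (x := WithLp.toLp 2 fun _ => π) fun _ => pi_ne_zero) ?_
  rw [fV_zero_const_pi]
  positivity

open MeasureTheory ENNReal in
theorem fV_Linfty_norm_general (d : ℕ) :
    ∃ C₁ C₂ : ℝ, 0 < C₁ ∧ 0 < C₂ ∧ ∀ n : ℕ,
      ENNReal.ofReal (C₁ * (2 : ℝ) ^ ((n : ℝ) * d)) ≤ eLpNorm (fV d n) ∞ volume ∧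
      eLpNorm (fV d n) ∞ volume ≤ ENNReal.ofReal (C₂ * (2 : ℝ) ^ ((n : ℝ) * d)) := by
  set C := (eLpNorm (fV d 0) ∞ volume).toReal
  have hC : 0 < C := ENNReal.toReal_pos (eLpNorm_top_fV_zero_ne_zero d) (eLpNorm_top_fV_ne_top d 0)
  have hscale (n : ℕ) :
      ENNReal.ofReal (C * (2 : ℝ) ^ ((n : ℝ) * d)) = eLpNorm (fV d n) ∞ volume := by
    rw [eLpNorm_top_fV, Real.rpow_mul zero_le_two, Real.rpow_natCast, Real.rpow_natCast,
      ENNReal.ofReal_mul hC.le, ENNReal.ofReal_toReal (eLpNorm_top_fV_ne_top d 0), mul_comm]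
  exact ⟨C, C, hC, hC, fun n => ⟨(hscale n).le, (hscale n).ge⟩⟩

open MeasureTheory ENNReal in
/-- **Sup-norm of `f_{n+1}`:** `‖f_{n+1}‖_{L_∞(ℝ^d)} ≍ 2^{nd}`. -/
theorem fV_Linfty_norm (d : ℕ) (hd : 1 ≤ d) :
    ∃ C₁ C₂ : ℝ, 0 < C₁ ∧ 0 < C₂ ∧ ∀ n : ℕ,
      ENNReal.ofReal (C₁ * (2 : ℝ) ^ ((n : ℝ) * d)) ≤ eLpNorm (fV d n) ∞ volume ∧
      eLpNorm (fV d n) ∞ volume ≤ ENNReal.ofReal (C₂ * (2 : ℝ) ^ ((n : ℝ) * d)) :=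
  fV_Linfty_norm_general d
end

section
/- Let d ≥ 1, 1 ≤ p < ∞, and for n ∈ ℕ set f_{n+1}(x) = ∏_{j=1}^d (V_{2^{n+1}}(x_j) − V_{2^n}(x_j)). Then there exist constants C₁, C₂ > 0 (independent of n) such that C₁·2^{nd(1−1/p)} ≤ ‖f_{n+1}‖_{L_p(ℝ^d)} ≤ C₂·2^{nd(1−1/p)} for all n ∈ ℕ. -/
open MeasureTheory ENNReal Finset
open scoped RealInnerProductSpace

/-!
Each factor of `f_{n+1}` is the dilate `2^n h(2^n ·)` of `h = V_2 − V_1`, whose `L_p` norm is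
`2^{n(1−1/p)} ‖h‖_p`, and the `L_p` norm of a tensor product is the product of the norms; hence
`‖f_{n+1}‖_p = ‖h‖_p^d · 2^{nd(1−1/p)}` exactly. The constant `‖h‖_p^d` is finite because
`h = O((1 + u²)⁻¹)` and `p > 1/2`, and nonzero because `h` is continuous near `π` with
`h(π) = 2/π²`.
-/

open MeasureTheory ENNReal Real

theorem lintegral_fin_nat_prod_eq_pow {E : Type*} [MeasurableSpace E] {μ : Measure E}
    [SigmaFinite μ] {f : E → ℝ≥0∞} (hf : Measurable f) (n : ℕ) :
    ∫⁻ x : Fin n → E, ∏ i, f (x i) ∂Measure.pi (fun _ ↦ μ) = (∫⁻ x, f x ∂μ) ^ n := by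
  induction n with
  | zero => simp
  | succ n ih =>
    have hprod (m : ℕ) : Measurable fun x : Fin m → E ↦ ∏ i, f (x i) :=
      Finset.measurable_prod _ fun i _ ↦ hf.comp (measurable_pi_apply i)
    rw [← (measurePreserving_piFinSuccAbove (fun _ ↦ μ) 0).symm.lintegral_comp (hprod _)]
    simp_rw [MeasurableEquiv.piFinSuccAbove_symm_apply, Fin.insertNthEquiv, Equiv.coe_fn_mk,
      Fin.prod_univ_succ, Fin.insertNth_zero, Fin.cons_zero, Fin.cons_succ, cast_eq]
    rw [lintegral_prod_mul hf.aemeasurable (hprod n).aemeasurable, ih, pow_succ']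

theorem eLpNorm_euclideanSpace_prod_apply {d : ℕ} {g : ℝ → ℝ} (hg : Measurable g) {p : ℝ≥0∞}
    (hp₀ : p ≠ 0) (hp : p ≠ ∞) :
    eLpNorm (fun x : EuclideanSpace ℝ (Fin d) ↦ ∏ j, g (x j)) p volume =
      eLpNorm g p volume ^ d := by
  set F : ℝ → ℝ≥0∞ := fun t ↦ ‖g t‖ₑ ^ p.toReal
  have hF : Measurable F := hg.enorm.pow_const _
  have hprod : ∀ x : EuclideanSpace ℝ (Fin d), ‖∏ j, g (x j)‖ₑ ^ p.toReal = ∏ j, F (x j) := by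
    intro x
    simp only [F, enorm_eq_nnnorm, nnnorm_prod, ENNReal.ofNNReal_finsetProd,
      ENNReal.prod_rpow_of_nonneg ENNReal.toReal_nonneg]
  have hvol : ∫⁻ x : EuclideanSpace ℝ (Fin d), ∏ j, F (x j) = (∫⁻ t, F t) ^ d :=
    ((EuclideanSpace.volume_preserving_symm_measurableEquiv_toLp (Fin d)).lintegral_comp
      (Finset.measurable_prod _ fun j _ ↦ hF.comp (measurable_pi_apply j))).trans
      (lintegral_fin_nat_prod_eq_pow hF d)
  simp_rw [eLpNorm_eq_lintegral_rpow_enorm_toReal hp₀ hp, hprod, hvol, ← ENNReal.rpow_natCast,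
    ← ENNReal.rpow_mul, mul_comm]
  rfl

theorem eLpNorm_comp_mul_left {E : Type*} [NormedAddCommGroup E] (g : ℝ → E) {a : ℝ} (ha : a ≠ 0)
    {p : ℝ≥0∞} (hp : p ≠ ∞) :
    eLpNorm (fun t ↦ g (a * t)) p volume =
      ENNReal.ofReal |a⁻¹| ^ (1 / p).toReal * eLpNorm g p volume := by
  rw [← smul_eq_mul, ← eLpNorm_smul_measure_of_ne_top hp, ← Real.map_volume_mul_left ha]
  exact ((Homeomorph.mulLeft₀ a ha).measurableEmbedding.eLpNorm_map_measure (g := g)).symm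

noncomputable def vpBlock (n : ℕ) (t : ℝ) : ℝ := V1 (n + 1) t - V1 n t

theorem fV_eq_prod_vpBlock (d n : ℕ) : fV d n = fun x ↦ ∏ j, vpBlock n (x j) := rfl

theorem measurable_vpBlock (n : ℕ) : Measurable (vpBlock n) := by
  unfold vpBlock V1; fun_prop

theorem continuousOn_vpBlock (n : ℕ) : ContinuousOn (vpBlock n) (Set.Ioi 0) := by
  unfold vpBlock V1
  refine ContinuousOn.sub ?_ ?_ <;>
    exact ContinuousOn.div (by fun_prop) (by fun_prop) fun t ht ↦ pow_ne_zero 2 (ne_of_gt ht)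

theorem vpBlock_eq_dilate (n : ℕ) (t : ℝ) : vpBlock n t = 2 ^ n * vpBlock 0 (2 ^ n * t) := by
  rcases eq_or_ne t 0 with rfl | ht
  · simp [vpBlock, V1]
  · unfold vpBlock V1
    field_simp
    ring_nf

theorem vpBlock_zero_pi : vpBlock 0 π = 2 / π ^ 2 := by
  have hcos4 : cos (4 * π) = 1 := by
    rw [show 4 * π = (2 : ℕ) * (2 * π) by push_cast; ring, cos_nat_mul_two_pi]
  unfold vpBlock V1
  norm_num [cos_pi, cos_two_pi, hcos4]
  ring

theorem abs_vpBlock_zero_le (u : ℝ) : |vpBlock 0 u| ≤ 11 * (1 + u ^ 2)⁻¹ := by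
  rcases eq_or_ne u 0 with rfl | hu
  · simp [vpBlock, V1]
  have hu2 : 0 < u ^ 2 := by positivity
  have hnum : vpBlock 0 u =
      (2⁻¹ * (cos (2 * u) - cos (4 * u)) - (cos u - cos (2 * u))) / u ^ 2 := by
    unfold vpBlock V1; norm_num; ring_nf
  have := cos_le_one (2 * u); have := cos_le_one (4 * u); have := cos_le_one u
  have := neg_one_le_cos (2 * u); have := neg_one_le_cos (4 * u); have := neg_one_le_cos u
  have := one_sub_sq_div_two_le_cos (x := 2 * u)
  have := one_sub_sq_div_two_le_cos (x := 4 * u)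
  have := one_sub_sq_div_two_le_cos (x := u)
  -- near `0` the numerator is `O(u²)`, away from `0` it is bounded
  have hsmall : |2⁻¹ * (cos (2 * u) - cos (4 * u)) - (cos u - cos (2 * u))| ≤ 15 / 2 * u ^ 2 := by
    rw [abs_le]; constructor <;> nlinarith
  have hbdd : |2⁻¹ * (cos (2 * u) - cos (4 * u)) - (cos u - cos (2 * u))| ≤ 3 := by
    rw [abs_le]; constructor <;> nlinarith
  rw [hnum, abs_div, abs_of_pos hu2, ← div_eq_mul_inv, div_le_div_iff₀ hu2 (by positivity)]
  nlinarith

theorem memLp_inv_one_add_sq {p : ℝ} (hp : 1 / 2 < p) :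
    MemLp (fun u : ℝ ↦ (1 + u ^ 2)⁻¹) (ENNReal.ofReal p) volume := by
  have hp₀ : ENNReal.ofReal p ≠ 0 := by simp; linarith
  refine (integrable_norm_rpow_iff (by fun_prop) hp₀ ofReal_ne_top).1 ?_
  refine (integrable_rpow_neg_one_add_norm_sq (E := ℝ) (r := 2 * p) (by simp; linarith)).congr
    (Filter.Eventually.of_forall fun u ↦ ?_)
  simp only [norm_inv, Real.norm_eq_abs, sq_abs, ENNReal.toReal_ofReal (by linarith : 0 ≤ p)]
  rw [abs_of_pos (by positivity), ← Real.rpow_neg_one, ← Real.rpow_mul (by positivity)]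
  ring_nf

theorem memLp_vpBlock_zero {p : ℝ} (hp : 1 / 2 < p) :
    MemLp (vpBlock 0) (ENNReal.ofReal p) volume :=
  ((memLp_inv_one_add_sq hp).const_mul 11).of_le (measurable_vpBlock 0).aestronglyMeasurable
    (Filter.Eventually.of_forall fun u ↦ by
      simpa [abs_of_pos (by positivity : (0 : ℝ) < 1 + u ^ 2)] using abs_vpBlock_zero_le u)

theorem eLpNorm_vpBlock_zero_ne_zero {p : ℝ≥0∞} (hp : p ≠ 0) :
    eLpNorm (vpBlock 0) p volume ≠ 0 := by
  rw [Ne, eLpNorm_eq_zero_iff (measurable_vpBlock 0).aestronglyMeasurable hp]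
  intro h
  have hπ := Measure.eqOn_open_of_ae_eq (ae_restrict_of_ae h) isOpen_Ioi (continuousOn_vpBlock 0)
    continuousOn_const (show π ∈ Set.Ioi 0 from pi_pos)
  rw [vpBlock_zero_pi] at hπ
  simp at hπ

theorem eLpNorm_vpBlock {p : ℝ} (hp : 0 < p) (n : ℕ) :
    eLpNorm (vpBlock n) (ENNReal.ofReal p) volume =
      ENNReal.ofReal (2 ^ ((n : ℝ) * (1 - 1 / p))) *
        eLpNorm (vpBlock 0) (ENNReal.ofReal p) volume := by
  have hscale : (2 : ℝ) ^ n * ((2 ^ n)⁻¹) ^ (1 / p) = 2 ^ ((n : ℝ) * (1 - 1 / p)) := by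
    rw [← Real.rpow_natCast, ← Real.rpow_neg zero_le_two, ← Real.rpow_mul zero_le_two,
      ← Real.rpow_add two_pos]
    ring_nf
  have hsmul : vpBlock n = (2 : ℝ) ^ n • fun t ↦ vpBlock 0 (2 ^ n * t) :=
    funext (vpBlock_eq_dilate n)
  rw [hsmul, eLpNorm_const_smul, eLpNorm_comp_mul_left _ (by positivity) ofReal_ne_top,
    ← mul_assoc, ENNReal.toReal_div, ENNReal.toReal_ofReal hp.le, ENNReal.toReal_one,
    Real.enorm_of_nonneg (by positivity),
    ENNReal.ofReal_rpow_of_nonneg (abs_nonneg _) (by positivity),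
    ← ENNReal.ofReal_mul (by positivity), abs_of_pos (by positivity), hscale]

open MeasureTheory ENNReal in
theorem fV_Lp_norm_general (d : ℕ) (p : ℝ) (hp : 1 ≤ p) :
    ∃ C₁ C₂ : ℝ, 0 < C₁ ∧ 0 < C₂ ∧ ∀ n : ℕ,
      ENNReal.ofReal (C₁ * (2 : ℝ) ^ ((n : ℝ) * d * (1 - 1 / p))) ≤
        eLpNorm (fV d n) (ENNReal.ofReal p) volume ∧
      eLpNorm (fV d n) (ENNReal.ofReal p) volume ≤
        ENNReal.ofReal (C₂ * (2 : ℝ) ^ ((n : ℝ) * d * (1 - 1 / p))) := by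
  have hp₀ : ENNReal.ofReal p ≠ 0 := by simp; linarith
  set N := eLpNorm (vpBlock 0) (ENNReal.ofReal p) volume
  have hN : N ^ d ≠ ∞ := pow_ne_top (memLp_vpBlock_zero (by linarith)).eLpNorm_ne_top
  have hC : 0 < (N ^ d).toReal := toReal_pos (pow_ne_zero d (eLpNorm_vpBlock_zero_ne_zero hp₀)) hN
  have hnorm (n : ℕ) : eLpNorm (fV d n) (ENNReal.ofReal p) volume =
      ENNReal.ofReal ((N ^ d).toReal * 2 ^ ((n : ℝ) * d * (1 - 1 / p))) := by
    have hpow : ((2 : ℝ) ^ ((n : ℝ) * (1 - 1 / p))) ^ d = 2 ^ ((n : ℝ) * d * (1 - 1 / p)) := by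
      rw [← Real.rpow_natCast, ← Real.rpow_mul zero_le_two]
      ring_nf
    rw [fV_eq_prod_vpBlock, eLpNorm_euclideanSpace_prod_apply (measurable_vpBlock n) hp₀
      ofReal_ne_top, eLpNorm_vpBlock (by linarith) n, mul_pow, ← ofReal_pow (by positivity), hpow,
      ENNReal.ofReal_mul hC.le, ofReal_toReal hN, mul_comm]
  exact ⟨_, _, hC, hC, fun n ↦ ⟨(hnorm n).ge, (hnorm n).le⟩⟩

open MeasureTheory ENNReal in
/-- **`L_p`-norm of `f_{n+1}`:** for `1 ≤ p < ∞`, `‖f_{n+1}‖_{L_p(ℝ^d)} ≍ 2^{nd(1−1/p)}`. -/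
theorem fV_Lp_norm (d : ℕ) (hd : 1 ≤ d) (p : ℝ) (hp : 1 ≤ p) :
    ∃ C₁ C₂ : ℝ, 0 < C₁ ∧ 0 < C₂ ∧ ∀ n : ℕ,
      ENNReal.ofReal (C₁ * (2 : ℝ) ^ ((n : ℝ) * d * (1 - 1 / p))) ≤
        eLpNorm (fV d n) (ENNReal.ofReal p) volume ∧
      eLpNorm (fV d n) (ENNReal.ofReal p) volume ≤
        ENNReal.ofReal (C₂ * (2 : ℝ) ^ ((n : ℝ) * d * (1 - 1 / p))) :=
  fV_Lp_norm_general d p hp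
end
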